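/- arXiv:2211.06272 — 2 statements merged into one kernel-verified Lean document; each statement's English description precedes it below -/
import Mathlib

section
/- Let 0 < α < 1 and λ > 0. Suppose E : [0,T] → ℝ is continuous on (0,T], piecewise C¹ on (0,T], with E(0) = 0 and lim_{t→0^+} E(t) ≥ 0, and suppose (D_t^α + λ)E(t) ≥ 0 for all t ∈ (0,T] (where D_t^α is the Caputo derivative computed from the limit value E(0^+)). Then E(t) ≥ 0 for all t ∈ (0,T]. -/
/-!
If `E` were negative somewhere in `(0, T)`, then, since `E(0⁺) ≥ 0`, it would attain its minimum
over some `(0, t]` at a point `u` with `E u < 0`. Writing `(u - s)^(-α) E'(s)` as the derivative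
of `(u - s)^(-α) (E s - E u)` minus `α (u - s)^(-α-1) (E s - E u) ≥ 0` shows that the Caputo
integral at `u` is bounded by the boundary term at `s = u` (the one at the left end
only helps, as `u` is a minimum), and this term vanishes because `α < 1` and
`E` is differentiable at `u`. Hence `D_t^α E(u) ≤ 0` and `(D_t^α + λ) E(u) < 0`, a contradiction.
-/

open Set Filter MeasureTheory intervalIntegral
open scoped Topology

section CaputoAtMinimum

variable {α u : ℝ} {E : ℝ → ℝ}

lemma hasDerivAt_rpow_neg_mul_sub {s : ℝ} (hs : s < u) (hE : DifferentiableAt ℝ E s) :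
    HasDerivAt (fun s => (u - s) ^ (-α) * (E s - E u))
      (α * (u - s) ^ (-α - 1) * (E s - E u) + (u - s) ^ (-α) * deriv E s) s := by
  have hpow : HasDerivAt (fun s => (u - s) ^ (-α)) (α * (u - s) ^ (-α - 1)) s := by
    convert ((hasDerivAt_id' s).const_sub u).rpow_const (p := -α) (Or.inl (sub_pos.2 hs).ne')
      using 1
    simp only [neg_mul, one_mul, neg_neg]
  exact hpow.mul (hE.hasDerivAt.sub_const (E u))

lemma integral_rpow_neg_mul_deriv_le {a b : ℝ} (hα : 0 < α) (hab : a ≤ b) (hbu : b < u)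
    (hdiff : ∀ s ∈ Icc a b, DifferentiableAt ℝ E s) (hmin : ∀ s ∈ Icc a b, E u ≤ E s)
    (hint : IntervalIntegrable (fun s => (u - s) ^ (-α) * deriv E s) volume a b) :
    ∫ s in a..b, (u - s) ^ (-α) * deriv E s ≤
      (u - b) ^ (-α) * (E b - E u) - (u - a) ^ (-α) * (E a - E u) := by
  have hderiv : ∀ s ∈ uIcc a b, HasDerivAt (fun s => (u - s) ^ (-α) * (E s - E u))
      (α * (u - s) ^ (-α - 1) * (E s - E u) + (u - s) ^ (-α) * deriv E s) s := by
    intro s hs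
    rw [uIcc_of_le hab] at hs
    exact hasDerivAt_rpow_neg_mul_sub (hs.2.trans_lt hbu) (hdiff s hs)
  have hcont : ContinuousOn (fun s => α * (u - s) ^ (-α - 1) * (E s - E u)) (uIcc a b) := by
    rw [uIcc_of_le hab]
    refine (continuousOn_const.mul ?_).mul ((?_ : ContinuousOn E _).sub continuousOn_const)
    · exact (continuousOn_const.sub continuousOn_id).rpow_const
        fun s hs => Or.inl (sub_pos.2 (hs.2.trans_lt hbu)).ne'
    · exact fun s hs => (hdiff s hs).continuousAt.continuousWithinAt
  have hint' := hcont.intervalIntegrable.add hint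
  rw [← integral_eq_sub_of_hasDerivAt hderiv hint']
  refine integral_mono_on hab hint hint' fun s hs => le_add_of_nonneg_left ?_
  exact mul_nonneg (mul_nonneg hα.le (Real.rpow_nonneg (by linarith [hs.2]) _))
    (sub_nonneg.2 (hmin s hs))

lemma tendsto_rpow_neg_mul_sub_nhdsLT (hα : α < 1) (hE : DifferentiableAt ℝ E u) :
    Tendsto (fun s => (u - s) ^ (-α) * (E s - E u)) (𝓝[<] u) (𝓝 0) := by
  have hslope : Tendsto (slope E u) (𝓝[<] u) (𝓝 (deriv E u)) :=
    hE.hasDerivAt.tendsto_slope.mono_left (nhdsWithin_mono _ fun s hs => ne_of_lt hs)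
  have hpow : Tendsto (fun s => (u - s) ^ (1 - α)) (𝓝[<] u) (𝓝 0) := by
    have hc : ContinuousAt (fun s : ℝ => (u - s) ^ (1 - α)) u :=
      (continuousAt_const.sub continuousAt_id).rpow_const (Or.inr (by linarith))
    simpa [Real.zero_rpow (by linarith : (1 : ℝ) - α ≠ 0)] using
      hc.tendsto.mono_left nhdsWithin_le_nhds
  -- `(u - s)^(-α) (E s - E u) = -(u - s)^(1-α) · slope E u s`
  have := (hpow.mul hslope).neg
  rw [zero_mul, neg_zero] at this
  refine this.congr' ?_
  filter_upwards [self_mem_nhdsWithin] with s (hs : s < u)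
  have hus : 0 < u - s := sub_pos.2 hs
  rw [slope_def_field, show 1 - α = -α + 1 by ring, Real.rpow_add hus, Real.rpow_one]
  field_simp [hus.ne', (sub_neg.2 hs).ne]
  ring

lemma integral_zero_rpow_neg_mul_deriv_le_of_isMinOn {b : ℝ} (hα : 0 < α) (hb : b ∈ Ioo 0 u)
    (hdiff : ∀ s ∈ Ioc 0 u, DifferentiableAt ℝ E s) (hmin : IsMinOn E (Ioc 0 u) u)
    (hint : IntegrableOn (fun s => (u - s) ^ (-α) * deriv E s) (uIcc 0 b)) :
    ∫ s in (0 : ℝ)..b, (u - s) ^ (-α) * deriv E s ≤ (u - b) ^ (-α) * (E b - E u) := by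
  have hmem : (0 : ℝ) ∈ closure (Ioo 0 b) := by
    rw [closure_Ioo hb.1.ne]
    exact left_mem_Icc.2 hb.1.le
  have hprim := continuousOn_primitive_interval_left hint 0 left_mem_uIcc
  rw [uIcc_of_le hb.1.le] at hprim hint
  refine ContinuousWithinAt.closure_le (f := fun a => ∫ s in a..b, (u - s) ^ (-α) * deriv E s)
    hmem (hprim.mono Ioo_subset_Icc_self) continuousWithinAt_const fun a ha => ?_
  have hsub : Icc a b ⊆ Ioc 0 u := Icc_subset_Ioc ha.1 hb.2.le
  have hEa : 0 ≤ (u - a) ^ (-α) * (E a - E u) :=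
    mul_nonneg (Real.rpow_nonneg (by linarith [ha.2, hb.2]) _)
      (sub_nonneg.2 (hmin (hsub (left_mem_Icc.2 ha.2.le))))
  have hinta : IntervalIntegrable (fun s => (u - s) ^ (-α) * deriv E s) volume a b :=
    (intervalIntegrable_iff_integrableOn_Icc_of_le ha.2.le).2
      (hint.mono_set (Icc_subset_Icc_left ha.1.le))
  have := integral_rpow_neg_mul_deriv_le hα ha.2.le hb.2 (fun s hs => hdiff s (hsub hs))
    (fun s hs => hmin (hsub hs)) hinta
  linarith

lemma integral_rpow_neg_mul_deriv_nonpos_of_isMinOn (hα0 : 0 < α) (hα1 : α < 1) (hu : 0 < u)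
    (hdiff : ∀ s ∈ Ioc 0 u, DifferentiableAt ℝ E s) (hmin : IsMinOn E (Ioc 0 u) u) :
    ∫ s in (0 : ℝ)..u, (u - s) ^ (-α) * deriv E s ≤ 0 := by
  by_cases hint : IntervalIntegrable (fun s => (u - s) ^ (-α) * deriv E s) volume 0 u
  swap
  · exact (integral_undef hint).le
  rw [intervalIntegrable_iff_integrableOn_Icc_of_le hu.le, ← uIcc_of_le hu.le] at hint
  have hprim : Tendsto (fun b => ∫ s in (0 : ℝ)..b, (u - s) ^ (-α) * deriv E s) (𝓝[<] u)
      (𝓝 (∫ s in (0 : ℝ)..u, (u - s) ^ (-α) * deriv E s)) :=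
    (continuousOn_primitive_interval hint u right_mem_uIcc).mono_of_mem_nhdsWithin
      (by rw [uIcc_of_le hu.le]; exact Icc_mem_nhdsLT hu)
  refine le_of_tendsto_of_tendsto hprim
    (tendsto_rpow_neg_mul_sub_nhdsLT hα1 (hdiff u ⟨hu, le_rfl⟩)) ?_
  filter_upwards [Ioo_mem_nhdsLT hu] with b hb
  refine integral_zero_rpow_neg_mul_deriv_le_of_isMinOn hα0 hb hdiff hmin
    (hint.mono_set (uIcc_subset_uIcc_left ?_))
  rw [uIcc_of_le hu.le]
  exact ⟨hb.1.le, hb.2.le⟩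

end CaputoAtMinimum

lemma exists_isMinOn_Ioc_of_tendsto_nhdsGT {E : ℝ → ℝ} {t E₀ : ℝ} (ht : 0 < t)
    (hcont : ContinuousOn E (Ioc 0 t)) (hlim : Tendsto E (𝓝[>] 0) (𝓝 E₀)) (hlt : E t < E₀) :
    ∃ u ∈ Ioc 0 t, IsMinOn E (Ioc 0 t) u := by
  obtain ⟨δ, hδ, hδE⟩ := (mem_nhdsGT_iff_exists_mem_Ioc_Ioo_subset ht).1
    (hlim.eventually (eventually_gt_nhds hlt))
  obtain ⟨u, hu, humin⟩ := isCompact_Icc.exists_isMinOn (nonempty_Icc.2 hδ.2)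
    (hcont.mono (Icc_subset_Ioc hδ.1 le_rfl))
  refine ⟨u, ⟨hδ.1.trans_le hu.1, hu.2⟩, isMinOn_iff.2 fun s hs => ?_⟩
  rcases lt_or_ge s δ with hsδ | hδs
  · exact (humin (right_mem_Icc.2 hδ.2)).trans (hδE ⟨hs.1, hsδ⟩).le
  · exact humin ⟨hδs, hs.2⟩

theorem fractional_maximum_principle_general
    (α lam T : ℝ) (hα0 : 0 < α) (hα1 : α < 1) (hlam : 0 < lam)
    (E : ℝ → ℝ) (E₀ : ℝ)
    (hcont : ContinuousOn E (Set.Ioc 0 T))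
    (hdiff : ∀ t ∈ Set.Ioo (0:ℝ) T, DifferentiableAt ℝ E t)
    (hlim : Filter.Tendsto E (nhdsWithin 0 (Set.Ioi 0)) (nhds E₀))
    (hE₀ : 0 ≤ E₀)
    (hineq : ∀ t ∈ Set.Ioc (0:ℝ) T,
        0 ≤ (1 / Real.Gamma (1 - α)) * (∫ s in (0:ℝ)..t, (t - s) ^ (-α) * deriv E s)
            + lam * E t) :
    ∀ t ∈ Set.Ioc (0:ℝ) T, 0 ≤ E t := by
  have hpos : ∀ t ∈ Ioo 0 T, 0 ≤ E t := by
    intro t ht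
    by_contra! hneg
    obtain ⟨u, hu, humin⟩ := exists_isMinOn_Ioc_of_tendsto_nhdsGT ht.1
      (hcont.mono (Ioc_subset_Ioc_right ht.2.le)) hlim (hneg.trans_le hE₀)
    have huT : u < T := hu.2.trans_lt ht.2
    have hcaputo := integral_rpow_neg_mul_deriv_nonpos_of_isMinOn hα0 hα1 hu.1
      (fun s hs => hdiff s ⟨hs.1, hs.2.trans_lt huT⟩)
      (humin.on_subset (Ioc_subset_Ioc_right hu.2))
    have hΓ : 0 < 1 / Real.Gamma (1 - α) := one_div_pos.2 (Real.Gamma_pos_of_pos (by linarith))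
    have hEu : E u < 0 := (humin ⟨ht.1, le_rfl⟩).trans_lt hneg
    nlinarith [hineq u ⟨hu.1, huT.le⟩, mul_nonpos_of_nonneg_of_nonpos hΓ.le hcaputo]
  intro t ht
  have hmem : t ∈ closure (Ioo 0 T) := by
    rw [closure_Ioo (ht.1.trans_le ht.2).ne]; exact Ioc_subset_Icc_self ht
  exact ContinuousWithinAt.closure_le (f := fun _ => 0) hmem continuousWithinAt_const
    ((hcont t ht).mono Ioo_subset_Ioc_self) hpos

/-- Maximum/comparison principle for the scalar fractional operator `D_t^α + λ`:
if `(D_t^α + λ)E ≥ 0` on `(0,T]` and `E(0⁺) ≥ 0`, then `E ≥ 0` on `(0,T]`. -/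
theorem fractional_maximum_principle
    (α lam T : ℝ) (hα0 : 0 < α) (hα1 : α < 1) (hlam : 0 < lam) (hT : 0 < T)
    (E : ℝ → ℝ) (E₀ : ℝ)
    (hE0 : E 0 = 0)
    (hcont : ContinuousOn E (Set.Ioc 0 T))
    (hdiff : ∀ t ∈ Set.Ioo (0:ℝ) T, DifferentiableAt ℝ E t)
    (hlim : Filter.Tendsto E (nhdsWithin 0 (Set.Ioi 0)) (nhds E₀))
    (hE₀ : 0 ≤ E₀)
    (hineq : ∀ t ∈ Set.Ioc (0:ℝ) T,
        0 ≤ (1 / Real.Gamma (1 - α)) * (∫ s in (0:ℝ)..t, (t - s) ^ (-α) * deriv E s)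
            + lam * E t) :
    ∀ t ∈ Set.Ioc (0:ℝ) T, 0 ≤ E t :=
  fractional_maximum_principle_general α lam T hα0 hα1 hlam E E₀ hcont hdiff hlim hE₀ hineq
end

section
/- Let 0 < α < 1 and suppose v : [0,T] → ℝ is continuous with v(0) = 0, piecewise C¹ on (0,T], and attains a maximum of |v| at some point t* ∈ (0,T] with v(t*) ≥ 0. Then D_t^α v(t*) ≥ 0, where D_t^α is the Caputo derivative. -/
/-!
Write `g s = (t - s) ^ (-α) * f' s` for the integrand. The weight `(t - s) ^ (-α)` is increasing
on `[a, t)`, so integrating by parts on `[a, b]` with `b < t` moves the derivative onto it and,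
since `f ≤ f t`, gives `∫ a..b, g ≥ (t - b) ^ (-α) * (f b - f t)`. Near `t` the weight is at least
`(t - b) ^ (-α)`, so `(t - b) ^ (-α) * (f t - f b) = (t - b) ^ (-α) * ∫ b..t, f' ≤ ∫ b..t, |g|`.
Hence `∫ a..t, g ≥ -2 ∫ b..t, |g|`, which tends to `0` as `b → t⁻`.
-/

open MeasureTheory Set Filter Topology intervalIntegral
open scoped Interval

section WeightedDerivative

variable {α t a b : ℝ} {f f' : ℝ → ℝ}

theorem hasDerivAt_sub_rpow_neg {x : ℝ} (hx : x < t) :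
    HasDerivAt (fun s => (t - s) ^ (-α)) (α * (t - x) ^ (-α - 1)) x := by
  convert ((hasDerivAt_id' x).const_sub t).rpow_const (p := -α) (Or.inl (sub_pos.2 hx).ne')
    using 1
  ring

theorem IntervalIntegrable.of_sub_rpow_neg_mul (hα : 0 ≤ α) (hat : a ≤ t)
    (hg : IntervalIntegrable (fun s => (t - s) ^ (-α) * f s) volume a t) :
    IntervalIntegrable f volume a t := by
  have hw : ContinuousOn (fun s => (t - s) ^ α) [[a, t]] :=
    (continuous_const.sub continuous_id).continuousOn.rpow_const fun _ _ => Or.inr hα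
  refine (hg.continuousOn_mul hw).congr_uIoo fun s hs => ?_
  rw [uIoo_of_le hat] at hs
  have hts : 0 < t - s := sub_pos.2 hs.2
  simp only [← mul_assoc, ← Real.rpow_add hts, add_neg_cancel, Real.rpow_zero, one_mul]

theorem sub_rpow_neg_mul_sub_le_integral (hα : 0 ≤ α) (hab : a ≤ b) (hbt : b < t) {M : ℝ}
    (hf : ContinuousOn f (Icc a b)) (hf' : ∀ x ∈ Ioo a b, HasDerivAt f (f' x) x)
    (hf'int : IntervalIntegrable f' volume a b) (hM : ∀ s ∈ Icc a b, f s ≤ M) :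
    (t - b) ^ (-α) * (f b - M) ≤ ∫ s in a..b, (t - s) ^ (-α) * f' s := by
  set w : ℝ → ℝ := fun s => (t - s) ^ (-α)
  set w' : ℝ → ℝ := fun s => α * (t - s) ^ (-α - 1)
  have hw : ∀ x ∈ Icc a b, HasDerivAt w (w' x) x := fun x hx =>
    hasDerivAt_sub_rpow_neg (hx.2.trans_lt hbt)
  have hw'cont : ContinuousOn w' (Icc a b) := continuousOn_const.mul <|
    (continuous_const.sub continuous_id).continuousOn.rpow_const fun x hx =>
      Or.inl (sub_pos.2 (hx.2.trans_lt hbt)).ne'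
  rw [← uIcc_of_le hab] at hf hw hw'cont
  have hw'int : IntervalIntegrable w' volume a b := hw'cont.intervalIntegrable
  have hparts := integral_mul_deriv_eq_deriv_mul_of_hasDerivAt
    (fun x hx => (hw x hx).continuousAt.continuousWithinAt) hf
    (fun x hx => hw x (Ioo_subset_Icc_self hx)) (fun x hx => hf' x (by simpa [hab] using hx))
    hw'int hf'int
  have hw'_integral : ∫ s in a..b, w' s = w b - w a :=
    integral_eq_sub_of_hasDerivAt hw hw'int
  have hw'f_le : ∫ s in a..b, w' s * f s ≤ ∫ s in a..b, w' s * M := by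
    refine integral_mono_on hab (hw'cont.mul hf).intervalIntegrable
      (hw'cont.mul continuousOn_const).intervalIntegrable fun s hs => ?_
    have : 0 ≤ w' s := mul_nonneg hα (Real.rpow_nonneg (sub_nonneg.2 (hs.2.trans hbt.le)) _)
    exact mul_le_mul_of_nonneg_left (hM s hs) this
  rw [intervalIntegral.integral_mul_const, hw'_integral] at hw'f_le
  have hwa : 0 ≤ w a * (M - f a) :=
    mul_nonneg (Real.rpow_nonneg (sub_nonneg.2 (hab.trans hbt.le)) _)
      (sub_nonneg.2 (hM a (left_mem_Icc.2 hab)))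
  change w b * (f b - M) ≤ ∫ s in a..b, w s * f' s
  rw [hparts]
  linarith

theorem sub_rpow_neg_mul_sub_le_integral_abs (hα : 0 ≤ α) (hbt : b < t)
    (hf : ContinuousOn f (Icc b t)) (hf' : ∀ x ∈ Ioo b t, HasDerivAt f (f' x) x)
    (hf'int : IntervalIntegrable f' volume b t)
    (hg : IntervalIntegrable (fun s => (t - s) ^ (-α) * f' s) volume b t) :
    (t - b) ^ (-α) * (f t - f b) ≤ ∫ s in b..t, |(t - s) ^ (-α) * f' s| := by
  rw [← integral_eq_sub_of_hasDerivAt_of_le hbt.le hf hf' hf'int,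
    ← intervalIntegral.integral_const_mul]
  refine integral_mono_on_of_le_Ioo hbt.le (hf'int.const_mul _) hg.abs fun s hs => ?_
  have hts : 0 < t - s := sub_pos.2 hs.2
  have hweight : (t - b) ^ (-α) ≤ (t - s) ^ (-α) :=
    Real.rpow_le_rpow_of_nonpos hts (by linarith [hs.1]) (neg_nonpos.2 hα)
  rw [abs_mul, abs_of_pos (Real.rpow_pos_of_pos hts _)]
  exact (mul_le_mul_of_nonneg_left (le_abs_self _) (Real.rpow_nonneg (by linarith) _)).trans
    (mul_le_mul_of_nonneg_right hweight (abs_nonneg _))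

theorem tendsto_integral_nhdsLT (hat : a < t) (hf : IntervalIntegrable f volume a t) :
    Tendsto (fun x => ∫ s in x..t, f s) (𝓝[<] t) (𝓝 0) := by
  have hcont := continuousOn_primitive_interval_left ((intervalIntegrable_iff' (μ := volume)).1 hf)
  have hmem : [[a, t]] ∈ 𝓝[<] t :=
    mem_of_superset (Ico_mem_nhdsLT hat) (Ico_subset_Icc_self.trans Icc_subset_uIcc)
  simpa using (hcont t right_mem_uIcc).tendsto.mono_left (nhdsWithin_le_of_mem hmem)

theorem integral_sub_rpow_neg_mul_deriv_nonneg (hα : 0 ≤ α) (hat : a < t)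
    (hf : ContinuousOn f (Icc a t)) (hf' : ∀ x ∈ Ioo a t, HasDerivAt f (f' x) x)
    (hmax : ∀ s ∈ Icc a t, f s ≤ f t) :
    0 ≤ ∫ s in a..t, (t - s) ^ (-α) * f' s := by
  set g : ℝ → ℝ := fun s => (t - s) ^ (-α) * f' s
  -- a non-integrable `g` has interval integral `0`
  by_cases hg : IntervalIntegrable g volume a t
  swap
  · rw [integral_undef hg]
  have hf'int := hg.of_sub_rpow_neg_mul hα hat.le
  have hsplit : ∀ b ∈ Ioo a t, -(2 * ∫ s in b..t, |g s|) ≤ ∫ s in a..t, g s := by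
    rintro b ⟨hab, hbt⟩
    have hb : b ∈ [[a, t]] := mem_uIcc_of_le hab.le hbt.le
    have hleft : [[a, b]] ⊆ [[a, t]] := uIcc_subset_uIcc_left hb
    have hright : [[b, t]] ⊆ [[a, t]] := uIcc_subset_uIcc_right hb
    have hhead := sub_rpow_neg_mul_sub_le_integral hα hab.le hbt
      (hf.mono (Icc_subset_Icc_right hbt.le)) (fun x hx => hf' x ⟨hx.1, hx.2.trans hbt⟩)
      (hf'int.mono_set hleft) fun s hs => hmax s ⟨hs.1, hs.2.trans hbt.le⟩
    have htail := sub_rpow_neg_mul_sub_le_integral_abs hα hbt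
      (hf.mono (Icc_subset_Icc_left hab.le)) (fun x hx => hf' x ⟨hab.trans hx.1, hx.2⟩)
      (hf'int.mono_set hright) (hg.mono_set hright)
    have hmid := (abs_le.1 (abs_integral_le_integral_abs hbt.le (f := g) (μ := volume))).1
    rw [← integral_add_adjacent_intervals (hg.mono_set hleft) (hg.mono_set hright)]
    linarith
  refine le_of_tendsto ?_ (eventually_of_mem (Ioo_mem_nhdsLT hat) hsplit)
  simpa using ((tendsto_integral_nhdsLT hat hg.abs).const_mul 2).neg

end WeightedDerivative

theorem caputo_nonneg_at_max_general
    (α T : ℝ) (hα0 : 0 < α) (hα1 : α < 1)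
    (v : ℝ → ℝ)
    (hcont : ContinuousOn v (Set.Icc 0 T))
    (hdiff : ∀ t ∈ Set.Ioo (0:ℝ) T, DifferentiableAt ℝ v t)
    (tstar : ℝ) (htstar : tstar ∈ Set.Ioc (0:ℝ) T)
    (hmax : ∀ s ∈ Set.Icc (0:ℝ) T, |v s| ≤ |v tstar|)
    (hpos : 0 ≤ v tstar) :
    0 ≤ (1 / Real.Gamma (1 - α)) *
        ∫ s in (0:ℝ)..tstar, (tstar - s) ^ (-α) * deriv v s := by
  obtain ⟨ht0, htT⟩ := htstar
  have hΓ : 0 < Real.Gamma (1 - α) := Real.Gamma_pos_of_pos (by linarith)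
  have hle : ∀ s ∈ Set.Icc 0 tstar, v s ≤ v tstar := fun s hs =>
    calc v s ≤ |v s| := le_abs_self _
      _ ≤ |v tstar| := hmax s ⟨hs.1, hs.2.trans htT⟩
      _ = v tstar := abs_of_nonneg hpos
  exact mul_nonneg (by positivity) <| integral_sub_rpow_neg_mul_deriv_nonneg hα0.le ht0
    (hcont.mono (Icc_subset_Icc_right htT))
    (fun x hx => (hdiff x ⟨hx.1, hx.2.trans_le htT⟩).hasDerivAt) hle

/-- If `v(0) = 0` and `|v|` attains its maximum over `[0,T]` at `t* ∈ (0,T]` with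
`v(t*) ≥ 0`, then the Caputo derivative of `v` at `t*` is nonnegative. -/
theorem caputo_nonneg_at_max
    (α T : ℝ) (hα0 : 0 < α) (hα1 : α < 1) (hT : 0 < T)
    (v : ℝ → ℝ)
    (hcont : ContinuousOn v (Set.Icc 0 T))
    (hv0 : v 0 = 0)
    (hdiff : ∀ t ∈ Set.Ioo (0:ℝ) T, DifferentiableAt ℝ v t)
    (tstar : ℝ) (htstar : tstar ∈ Set.Ioc (0:ℝ) T)
    (hmax : ∀ s ∈ Set.Icc (0:ℝ) T, |v s| ≤ |v tstar|)
    (hpos : 0 ≤ v tstar) :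
    0 ≤ (1 / Real.Gamma (1 - α)) *
        ∫ s in (0:ℝ)..tstar, (tstar - s) ^ (-α) * deriv v s :=
  caputo_nonneg_at_max_general α T hα0 hα1 v hcont hdiff tstar htstar hmax hpos
end
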